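/- Let c_{k,j} be rational numbers determined by q_{k,j} = (2k+4j)·c_{k,j} + (j+1)·c_{k,j+1} for k ≥ 1, k ≥ j ≥ 0 (with c_{k,j} = 0 for j > k), where q_{k,j} are given by the recursion q_{0,0}=1, q_{k,j} = (2k+4j−2)q_{k−1,j−1} + (j+1)q_{k−1,j} + Σ_{m=0}^{k−1}Σ_{l=0}^{j−1} q_{m,l}q_{k−1−m,j−1−l}. Then the diagonal coefficients satisfy Σ_{k≥1} c_{k,k} z^k = log(Σ_{k≥0} ((6k)!/((2k)!(3k)!))·(z/72)^k). -/

import Mathlib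

open PowerSeries

/-- `A(z) = Σ_{k≥0} ((6k)!/((2k)!(3k)!)) (z/72)^k`. -/
noncomputable def hgA : PowerSeries ℚ :=
  PowerSeries.mk fun k =>
    ((6 * k).factorial : ℚ) / (((2 * k).factorial : ℚ) * ((3 * k).factorial : ℚ)) / 72 ^ k

/-- `log(1+x) = Σ_{n≥1} (-1)^{n-1} x^n / n`. -/
noncomputable def logOneAdd : PowerSeries ℚ :=
  PowerSeries.mk fun n => if n = 0 then 0 else (-1) ^ (n - 1) / (n : ℚ)

/-- Composition `f ∘ g` of formal power series (the correct composition whenever the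
constant term of `g` vanishes). -/
noncomputable def comp (f g : PowerSeries ℚ) : PowerSeries ℚ :=
  PowerSeries.mk fun n =>
    ∑ k ∈ Finset.range (n + 1),
      PowerSeries.coeff k f * PowerSeries.coeff n (g ^ k)

/-!
Write `θ = z d/dz`, `L = log A` and `u = θL`. The coefficients of `A` satisfy
`6(n+1) a_{n+1} = (6n+1)(6n+5) a_n`, i.e. `6 θA = z (36 θ²A + 36 θA + 5A)`, and since `θA = A u`
this becomes the Riccati equation `6u = z (36u² + 36 θu + 36u + 5)`.
On the diagonal the recursion for `q` reads
`q_{k+1,k+1} = (6k+4) q_{k,k} + Σ_m q_{m,m} q_{k-m,k-m}`, so `Q = Σ q_{k,k} z^k` satisfies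
`Q = 1 + z (6 θQ + 4Q + Q²)`. So does `1 + 6u`, and this equation has only one solution, hence
`q_{k,k} = 6k [z^k] L`; on the other hand `q_{k,k} = 6k c_{k,k}`.
-/

namespace PowerSeries

section EulerOp

variable {R : Type*} [CommSemiring R]

noncomputable def eulerOp : Derivation R R⟦X⟧ R⟦X⟧ := (X : R⟦X⟧) • d⁄dX R

theorem eulerOp_apply (f : R⟦X⟧) : eulerOp f = X * d⁄dX R f := rfl

theorem coeff_eulerOp (f : R⟦X⟧) (n : ℕ) : coeff n (eulerOp f) = n * coeff n f := by
  rcases n with _ | n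
  · simp [eulerOp_apply]
  · rw [eulerOp_apply, coeff_succ_X_mul, coeff_derivative, mul_comm]
    push_cast
    rfl

theorem X_pow_dvd_eulerOp {n : ℕ} {f : R⟦X⟧} (h : X ^ n ∣ f) : X ^ n ∣ eulerOp f := by
  rw [X_pow_dvd_iff] at h ⊢
  intro m hm
  rw [coeff_eulerOp, h m hm, mul_zero]

theorem eq_zero_of_eq_X_mul_eulerOp {f a b : R⟦X⟧} (h : f = X * (a * eulerOp f + b * f)) :
    f = 0 := by
  have hdvd : ∀ n, X ^ n ∣ f := by
    intro n
    induction n with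
    | zero => exact one_dvd f
    | succ n ih =>
      rw [h, pow_succ']
      exact mul_dvd_mul_left X <|
        dvd_add (dvd_mul_of_dvd_right (X_pow_dvd_eulerOp ih) a) (dvd_mul_of_dvd_right ih b)
  ext n
  exact X_pow_dvd_iff.mp (hdvd (n + 1)) n n.lt_succ_self

end EulerOp

section Log

variable {A : Type*} [CommRing A] [Algebra ℚ A]

theorem one_add_X_mul_derivative_log : (1 + X) * d⁄dX A (log A) = 1 := by
  ext n
  rw [deriv_log, add_mul, one_mul, map_add, coeff_mk]
  rcases n with _ | n
  · simp
  · rw [coeff_succ_X_mul, coeff_mk]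
    simp [pow_succ]

theorem mul_derivative_logOf {f : A⟦X⟧} (hf : constantCoeff f = 1) :
    f * d⁄dX A (logOf f) = d⁄dX A f := by
  have hsub : HasSubst (f - 1) := HasSubst.of_constantCoeff_zero' (by simp [hf])
  have hinv : f * (d⁄dX A (log A)).subst (f - 1) = 1 := by
    have h := congrArg (subst (f - 1)) (one_add_X_mul_derivative_log (A := A))
    rw [subst_mul hsub, subst_add hsub, subst_X hsub, ← map_one (C (R := A)), subst_C] at h
    simpa using h
  rw [logOf_eq, derivative_subst hsub, ← mul_assoc, hinv, one_mul, map_sub,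
    Derivation.map_one_eq_zero, sub_zero]

theorem mul_eulerOp_logOf {f : A⟦X⟧} (hf : constantCoeff f = 1) :
    f * eulerOp (logOf f) = eulerOp f := by
  rw [eulerOp_apply, eulerOp_apply, mul_left_comm, mul_derivative_logOf hf]

theorem riccati_eulerOp_logOf {f a b c d : A⟦X⟧} (hf : constantCoeff f = 1)
    (hode : a * eulerOp f = X * (b * eulerOp (eulerOp f) + c * eulerOp f + d * f)) :
    a * eulerOp (logOf f) = X * (b * eulerOp (logOf f) ^ 2 + b * eulerOp (eulerOp (logOf f)) +
      c * eulerOp (logOf f) + d) := by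
  set u := eulerOp (logOf f)
  have hu : f * u = eulerOp f := mul_eulerOp_logOf hf
  have hu2 : eulerOp (eulerOp f) = f * (u ^ 2 + eulerOp u) := by
    rw [← hu, Derivation.leibniz, smul_eq_mul, smul_eq_mul, ← hu]
    ring
  apply (isUnit_iff_constantCoeff.mpr (hf ▸ isUnit_one)).mul_left_cancel
  linear_combination hode + (a - c * X) * hu + b * X * hu2

end Log

section Quadratic

variable {R : Type*} [CommRing R]

theorem eq_of_eulerOp_quadratic {F G : R⟦X⟧}
    (hF : F = 1 + X * (6 * eulerOp F + 4 * F + F ^ 2))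
    (hG : G = 1 + X * (6 * eulerOp G + 4 * G + G ^ 2)) : F = G := by
  refine sub_eq_zero.mp (eq_zero_of_eq_X_mul_eulerOp (a := 6) (b := 4 + F + G) ?_)
  rw [map_sub]
  linear_combination hF - hG

theorem one_add_six_mul_of_riccati {u : R⟦X⟧}
    (hu : 6 * u = X * (36 * u ^ 2 + 36 * eulerOp u + 36 * u + 5)) :
    1 + 6 * u = 1 + X * (6 * eulerOp (1 + 6 * u) + 4 * (1 + 6 * u) + (1 + 6 * u) ^ 2) := by
  have hθ : eulerOp (1 + 6 * u) = 6 * eulerOp u := by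
    rw [map_add, Derivation.map_one_eq_zero, zero_add, ← map_ofNat C, ← smul_eq_C_mul,
      ← smul_eq_C_mul, Derivation.map_smul]
  rw [hθ]
  linear_combination hu

theorem mk_eq_of_diag_rec {d : ℕ → R} (h0 : d 0 = 1)
    (hd : ∀ k : ℕ, d (k + 1) = (6 * k + 4) * d k + ∑ m ∈ Finset.range (k + 1), d m * d (k - m)) :
    mk d = 1 + X * (6 * eulerOp (mk d) + 4 * mk d + mk d ^ 2) := by
  ext n
  rcases n with _ | n
  · simp [h0]
  · rw [map_add, coeff_succ_X_mul, coeff_one, if_neg n.succ_ne_zero, zero_add]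
    simp only [← map_ofNat C, map_add, coeff_C_mul, coeff_eulerOp]
    rw [pow_two, coeff_mul, Finset.Nat.sum_antidiagonal_eq_sum_range_succ_mk]
    simp only [coeff_mk, hd]
    ring

end Quadratic

end PowerSeries

theorem logOneAdd_eq_log : logOneAdd = log ℚ := by
  ext n
  simp only [logOneAdd, coeff_mk, coeff_log, Algebra.algebraMap_self, RingHom.id_apply]
  rcases n with _ | n <;> simp [pow_succ]

theorem comp_eq_subst (f : ℚ⟦X⟧) {g : ℚ⟦X⟧} (hg : constantCoeff g = 0) :
    comp f g = f.subst g := by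
  ext n
  rw [comp, coeff_mk, coeff_subst' (HasSubst.of_constantCoeff_zero' hg),
    finsum_eq_sum_of_support_subset (s := Finset.range (n + 1))]
  · rfl
  intro k hk
  rw [Finset.coe_range, Set.mem_Iio]
  by_contra hnk
  refine hk ?_
  show coeff k f • coeff n (g ^ k) = 0
  rw [coeff_of_lt_order n ((Nat.cast_lt.mpr (by omega)).trans_le
    (le_order_pow_of_constantCoeff_eq_zero k hg)), smul_zero]

theorem comp_logOneAdd_sub_one {f : ℚ⟦X⟧} (hf : constantCoeff f = 1) :
    comp logOneAdd (f - 1) = logOf f := by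
  rw [comp_eq_subst _ (by simp [hf]), logOneAdd_eq_log, logOf_eq]

theorem constantCoeff_hgA : constantCoeff hgA = 1 := by
  simp [hgA, ← coeff_zero_eq_constantCoeff_apply]

theorem coeff_succ_hgA (n : ℕ) :
    6 * (n + 1) * coeff (n + 1) hgA = (36 * n ^ 2 + 36 * n + 5) * coeff n hgA := by
  simp only [hgA, coeff_mk]
  rw [show 6 * (n + 1) = 6 * n + 1 + 1 + 1 + 1 + 1 + 1 by ring,
    show 2 * (n + 1) = 2 * n + 1 + 1 by ring, show 3 * (n + 1) = 3 * n + 1 + 1 + 1 by ring]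
  simp only [Nat.factorial_succ]
  push_cast
  field_simp
  ring

theorem six_mul_eulerOp_hgA :
    6 * eulerOp hgA = X * (36 * eulerOp (eulerOp hgA) + 36 * eulerOp hgA + 5 * hgA) := by
  ext n
  rcases n with _ | n
  · simp [eulerOp_apply]
  · rw [coeff_succ_X_mul]
    simp only [← map_ofNat C, map_add, coeff_C_mul, coeff_eulerOp]
    push_cast
    linear_combination coeff_succ_hgA n

theorem diag_succ_of_rec (q : ℕ → ℕ → ℚ)
    (hvanish : ∀ k j, k < j → q k j = 0)
    (hrec : ∀ k j : ℕ, j ≤ k + 1 →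
      q (k + 1) j =
        (2 * ((k : ℚ) + 1) + 4 * j - 2) * (if j = 0 then 0 else q k (j - 1)) +
          ((j : ℚ) + 1) * q k j +
          ∑ m ∈ Finset.range (k + 1), ∑ l ∈ Finset.range j,
            q m l * q (k - m) (j - 1 - l)) (k : ℕ) :
    q (k + 1) (k + 1) =
      (6 * k + 4) * q k k + ∑ m ∈ Finset.range (k + 1), q m m * q (k - m) (k - m) := by
  rw [hrec k (k + 1) le_rfl, if_neg k.succ_ne_zero, hvanish k (k + 1) k.lt_succ_self, mul_zero,
    add_zero, Nat.add_sub_cancel]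
  -- `q_{m,l} q_{k-m,k-l}` vanishes unless `l ≤ m` and `k - l ≤ k - m`.
  have hinner : ∀ m ∈ Finset.range (k + 1),
      ∑ l ∈ Finset.range (k + 1), q m l * q (k - m) (k - l) = q m m * q (k - m) (k - m) := by
    intro m hm
    refine Finset.sum_eq_single_of_mem m hm fun l hl hlm => ?_
    rw [Finset.mem_range] at hm hl
    rcases lt_or_gt_of_ne hlm with hlt | hgt
    · rw [hvanish (k - m) (k - l) (by omega), mul_zero]
    · rw [hvanish m l hgt, zero_mul]
  rw [Finset.sum_congr rfl hinner]
  push_cast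
  ring

/-- If the `q_{k,j}` are given by the recursion of Ionel and the `c_{k,j}` are
determined by `q_{k,j} = (2k+4j)c_{k,j} + (j+1)c_{k,j+1}` (with `c_{k,j} = 0` for
`j > k`), then `Σ_{k≥1} c_{k,k} z^k = log A`. -/
theorem diag_c_eq_logA (q c : ℕ → ℕ → ℚ)
    (h0 : q 0 0 = 1)
    (hvanish : ∀ k j, k < j → q k j = 0)
    (hrec : ∀ k j : ℕ, j ≤ k + 1 →
      q (k + 1) j =
        (2 * ((k : ℚ) + 1) + 4 * j - 2) * (if j = 0 then 0 else q k (j - 1)) +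
          ((j : ℚ) + 1) * q k j +
          ∑ m ∈ Finset.range (k + 1), ∑ l ∈ Finset.range j,
            q m l * q (k - m) (j - 1 - l))
    (hcvanish : ∀ k j, k < j → c k j = 0)
    (hcrec : ∀ k j : ℕ, 1 ≤ k → j ≤ k →
      q k j = (2 * (k : ℚ) + 4 * j) * c k j + ((j : ℚ) + 1) * c k (j + 1)) :
    (PowerSeries.mk fun k => if k = 0 then 0 else c k k) = comp logOneAdd (hgA - 1) := by
  have hQ := mk_eq_of_diag_rec (d := fun k => q k k) h0 (diag_succ_of_rec q hvanish hrec)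
  have hP := one_add_six_mul_of_riccati
    (riccati_eulerOp_logOf constantCoeff_hgA six_mul_eulerOp_hgA)
  have hQP := eq_of_eulerOp_quadratic hQ hP
  rw [comp_logOneAdd_sub_one constantCoeff_hgA]
  ext n
  rcases n with _ | n
  · simp [constantCoeff_logOf constantCoeff_hgA]
  · have hq : q (n + 1) (n + 1) = 6 * (n + 1) * coeff (n + 1) (logOf hgA) := by
      simpa [← map_ofNat C, coeff_eulerOp, mul_assoc] using congrArg (coeff (n + 1)) hQP
    have hc := hcrec (n + 1) (n + 1) n.succ_pos le_rfl
    rw [hcvanish (n + 1) (n + 2) (by omega), mul_zero, add_zero] at hc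
    have hn : (6 * (n + 1) : ℚ) ≠ 0 := by positivity
    rw [coeff_mk, if_neg n.succ_ne_zero]
    apply mul_left_cancel₀ hn
    push_cast at hc
    linear_combination hq - hc
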